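/- arXiv:2501.12579 — 2 statements merged into one kernel-verified Lean document; each statement's English description precedes it below -/
import Mathlib

section
/- Let a ∈ {0,1}^ℤ have finite support, let J̃_ℓ be the operator on the fermionic Fock space that sums a†_{k+ℓ} a_k only over k > i*, and let x, y ∈ {0,1}^ℤ be finitely supported bit strings agreeing on all indices i ≤ i*. If x', y' are obtained from x, y by setting all bits at indices ≤ i* to zero, then ⟨y| ∏_j J_{ν_j} |x⟩ = ⟨y'| ∏_j J_{ν_j} |x'⟩, where J_ℓ = ∑_{k∈ℤ} a†_{k+ℓ} a_k and ν_j ≥ 1. -/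
/-! Fermionic Fock space on modes indexed by `ℤ`, modelled as the free
`ℂ`-module on occupation-number basis states, where a basis state is the
(finite) set of occupied modes.  Creation/annihilation operators are defined
with the Jordan–Wigner signs, so they satisfy the canonical anticommutation
relations. -/

noncomputable section

/-- The fermionic Fock space: the free `ℂ`-module with basis the finitely
supported occupation bit strings `x ∈ {0,1}^ℤ`, identified with the finite
sets of occupied modes. -/
abbrev FockSpace : Type := (Finset ℤ) →₀ ℂ

/-- Jordan–Wigner sign: `(−1)` to the number of occupied modes below `k`. -/
def jwSign (s : Finset ℤ) (k : ℤ) : ℂ := (-1) ^ (s.filter fun j => j < k).card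

/-- The fermionic annihilation operator `a_k`. -/
def annihilate (k : ℤ) : Module.End ℂ FockSpace :=
  Finsupp.lift FockSpace ℂ (Finset ℤ) fun s =>
    if k ∈ s then jwSign s k • Finsupp.single (s.erase k) 1 else 0

/-- The fermionic creation operator `a†_k`. -/
def create (k : ℤ) : Module.End ℂ FockSpace :=
  Finsupp.lift FockSpace ℂ (Finset ℤ) fun s =>
    if k ∈ s then 0 else jwSign s k • Finsupp.single (insert k s) 1

/-- The current operator `J_ℓ = ∑_{k ∈ ℤ} a†_{k+ℓ} a_k` (on each basis state
only the finitely many occupied modes `k` contribute). -/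
def current (ℓ : ℤ) : Module.End ℂ FockSpace :=
  Finsupp.lift FockSpace ℂ (Finset ℤ) fun s =>
    ∑ k ∈ s, create (k + ℓ) (annihilate k (Finsupp.single s 1))


/-! Every current `J_ℓ` with `ℓ ≥ 1` hops a particle to the right, so the total depth of the
particles at or below `istar` never increases, and it strictly decreases whenever one of
those particles hops.  Writing `x = L ∪ x'` with `L` the part at or below `istar`, the
current therefore acts on `|L ∪ s⟩` (for `s` above `istar`) as it acts on `|s⟩` with `L`
prepended, up to states of strictly smaller depth; the Jordan–Wigner signs agree because
`a†_m a_k` passes through the modes of `L` with two sign changes `(-1)^#L`.  The error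
terms can never reach `y`, whose part at or below `istar` is again `L`. -/

lemma list_prod_intertwine_mod {R M : Type*} [Ring R] [AddCommGroup M] [Module R M]
    (Ψ : M →ₗ[R] M) {A F : Submodule R M} {l : List (Module.End R M)}
    (hA : ∀ T ∈ l, A ≤ A.comap T) (hF : ∀ T ∈ l, F ≤ F.comap T)
    (hΨ : ∀ T ∈ l, ∀ f ∈ A, T (Ψ f) - Ψ (T f) ∈ F) {f : M} (hf : f ∈ A) :
    l.prod f ∈ A ∧ l.prod (Ψ f) - Ψ (l.prod f) ∈ F := by
  induction l with
  | nil => simpa using hf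
  | cons T l ih =>
    obtain ⟨hlA, hlF⟩ := ih (fun T' h => hA T' (List.mem_cons_of_mem _ h))
      (fun T' h => hF T' (List.mem_cons_of_mem _ h))
      (fun T' h => hΨ T' (List.mem_cons_of_mem _ h))
    have hT := List.mem_cons_self (a := T) (l := l)
    simp only [List.prod_cons, Module.End.mul_apply]
    refine ⟨hA T hT hlA, ?_⟩
    have hstep : T (l.prod (Ψ f)) - T (Ψ (l.prod f)) ∈ F := map_sub T _ _ ▸ hF T hT hlF
    simpa only [sub_add_sub_cancel] using F.add_mem hstep (hΨ T hT _ hlA)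

lemma Finsupp.supported_le_comap_of_single {α R M : Type*} [Semiring R] [AddCommMonoid M]
    [Module R M] {S : Set α} {T : (α →₀ R) →ₗ[R] M} {V : Submodule R M}
    (h : ∀ s ∈ S, T (Finsupp.single s 1) ∈ V) : Finsupp.supported R R S ≤ V.comap T := by
  rw [Finsupp.supported_eq_span_single, Submodule.span_le]
  rintro _ ⟨s, hs, rfl⟩
  exact h s hs

lemma Finset.disjoint_of_coe_subset_Iic_Ioi {α : Type*} [LinearOrder α] {c : α}
    {L s : Finset α} (hL : ↑L ⊆ Set.Iic c) (hs : ↑s ⊆ Set.Ioi c) : Disjoint L s :=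
  Finset.disjoint_coe.1 <| (Set.Iic_disjoint_Ioi le_rfl).mono hL hs

lemma Finset.filter_not_union_filter {α : Type*} [DecidableEq α] (s : Finset α) (p : α → Prop)
    [DecidablePred p] : s.filter (fun a => ¬p a) ∪ s.filter p = s := by
  rw [Finset.union_comm, Finset.filter_union_filter_not_eq]

lemma annihilate_single (k : ℤ) (s : Finset ℤ) :
    annihilate k (Finsupp.single s 1) =
      if k ∈ s then jwSign s k • Finsupp.single (s.erase k) 1 else 0 := by
  rw [annihilate, Finsupp.lift_apply, Finsupp.sum_single_index (by simp), one_smul]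

lemma create_single (k : ℤ) (s : Finset ℤ) :
    create k (Finsupp.single s 1) =
      if k ∈ s then 0 else jwSign s k • Finsupp.single (insert k s) 1 := by
  rw [create, Finsupp.lift_apply, Finsupp.sum_single_index (by simp), one_smul]

lemma current_single (ℓ : ℤ) (s : Finset ℤ) :
    current ℓ (Finsupp.single s 1) =
      ∑ k ∈ s, create (k + ℓ) (annihilate k (Finsupp.single s 1)) := by
  rw [current, Finsupp.lift_apply, Finsupp.sum_single_index (by simp), one_smul]

lemma create_annihilate_single (m k : ℤ) (s : Finset ℤ) :
    create m (annihilate k (Finsupp.single s 1)) =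
      if k ∈ s ∧ m ∉ s.erase k then
        (jwSign s k * jwSign (s.erase k) m) • Finsupp.single (insert m (s.erase k)) 1
      else 0 := by
  by_cases hk : k ∈ s
  · rw [annihilate_single, if_pos hk, map_smul, create_single]
    by_cases hm : m ∈ s.erase k
    · rw [if_pos hm, if_neg (fun h => h.2 hm), smul_zero]
    · rw [if_neg hm, if_pos ⟨hk, hm⟩, smul_smul]
  · rw [annihilate_single, if_neg hk, if_neg (fun h => hk h.1), map_zero]

lemma create_annihilate_single_mem_supported {S : Set (Finset ℤ)} {m k : ℤ} {s : Finset ℤ}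
    (h : k ∈ s → m ∉ s.erase k → insert m (s.erase k) ∈ S) :
    create m (annihilate k (Finsupp.single s 1)) ∈ Finsupp.supported ℂ ℂ S := by
  rw [create_annihilate_single]
  split_ifs with hkm
  · exact Submodule.smul_mem _ _ (Finsupp.single_mem_supported ℂ 1 (h hkm.1 hkm.2))
  · exact zero_mem _

lemma supported_le_comap_current {S : Set (Finset ℤ)} (ℓ : ℤ)
    (hS : ∀ s ∈ S, ∀ k ∈ s, k + ℓ ∉ s.erase k → insert (k + ℓ) (s.erase k) ∈ S) :
    Finsupp.supported ℂ ℂ S ≤ (Finsupp.supported ℂ ℂ S).comap (current ℓ) :=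
  Finsupp.supported_le_comap_of_single fun s hs => by
    rw [current_single]
    exact Submodule.sum_mem _ fun k hk =>
      create_annihilate_single_mem_supported fun _ hm => hS s hs k hk hm

lemma jwSign_union {L s : Finset ℤ} {m : ℤ} (hd : Disjoint L s) (hm : ∀ i ∈ L, i < m) :
    jwSign (L ∪ s) m = (-1) ^ L.card * jwSign s m := by
  rw [jwSign, jwSign, Finset.filter_union, Finset.filter_true_of_mem hm,
    Finset.card_union_of_disjoint (hd.mono_right (Finset.filter_subset _ _)), pow_add]

lemma create_annihilate_single_union {L s : Finset ℤ} {m k : ℤ} (hd : Disjoint L s)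
    (hk : ∀ i ∈ L, i < k) (hm : ∀ i ∈ L, i < m) :
    create m (annihilate k (Finsupp.single (L ∪ s) 1)) =
      Finsupp.lmapDomain ℂ ℂ (L ∪ ·) (create m (annihilate k (Finsupp.single s 1))) := by
  have hkL : k ∉ L := fun h => (hk k h).false
  have hmL : m ∉ L := fun h => (hm m h).false
  have herase : (L ∪ s).erase k = L ∪ s.erase k := by
    rw [Finset.erase_union_distrib, Finset.erase_eq_of_notMem hkL]
  have hsign : jwSign (L ∪ s) k * jwSign (L ∪ s.erase k) m =
      jwSign s k * jwSign (s.erase k) m := by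
    rw [jwSign_union hd hk, jwSign_union (hd.mono_right (Finset.erase_subset _ _)) hm,
      mul_mul_mul_comm, ← pow_add, ← two_mul, pow_mul, neg_one_sq, one_pow, one_mul]
  rw [create_annihilate_single, create_annihilate_single, herase, hsign]
  simp only [Finset.mem_union, hkL, hmL, false_or, apply_ite (Finsupp.lmapDomain ℂ ℂ _),
    map_zero, map_smul, Finsupp.lmapDomain_apply, Finsupp.mapDomain_single,
    Finset.union_insert]

/-- Each mode `i ≤ istar` weighs `istar + 1 - i ≥ 1`, so any rightward hop of such a particle
strictly lowers the depth. -/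
def lowerDepth (istar : ℤ) (s : Finset ℤ) : ℕ := ∑ i ∈ s, (istar + 1 - i).toNat

lemma lowerDepth_insert_erase (istar : ℤ) {s : Finset ℤ} {m k : ℤ} (hk : k ∈ s)
    (hm : m ∉ s.erase k) :
    lowerDepth istar (insert m (s.erase k)) + (istar + 1 - k).toNat =
      lowerDepth istar s + (istar + 1 - m).toNat := by
  rw [lowerDepth, lowerDepth, Finset.sum_insert hm, ← Finset.add_sum_erase s _ hk]
  ring

lemma lowerDepth_union {istar : ℤ} {L s : Finset ℤ} (hd : Disjoint L s)
    (hs : ↑s ⊆ Set.Ioi istar) : lowerDepth istar (L ∪ s) = lowerDepth istar L := by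
  rw [lowerDepth, lowerDepth, Finset.sum_union hd, add_eq_left]
  refine Finset.sum_eq_zero fun i hi => ?_
  have : istar < i := hs hi
  omega

def statesAbove (istar : ℤ) : Submodule ℂ FockSpace :=
  Finsupp.supported ℂ ℂ {s | ↑s ⊆ Set.Ioi istar}

def statesLowerDepthLT (istar : ℤ) (N : ℕ) : Submodule ℂ FockSpace :=
  Finsupp.supported ℂ ℂ {s | lowerDepth istar s < N}

lemma statesAbove_le_comap_current (istar : ℤ) {ℓ : ℤ} (hℓ : 0 ≤ ℓ) :
    statesAbove istar ≤ (statesAbove istar).comap (current ℓ) := by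
  refine supported_le_comap_current ℓ fun s hs k hk _ i hi => ?_
  rcases Finset.mem_insert.1 hi with rfl | hi
  · have : istar < k := hs hk
    exact Set.mem_Ioi.2 (by omega)
  · exact hs (Finset.mem_of_mem_erase hi)

lemma statesLowerDepthLT_le_comap_current (istar : ℤ) (N : ℕ) {ℓ : ℤ} (hℓ : 0 ≤ ℓ) :
    statesLowerDepthLT istar N ≤ (statesLowerDepthLT istar N).comap (current ℓ) := by
  refine supported_le_comap_current ℓ fun s hs k hk hkℓ => ?_
  have := lowerDepth_insert_erase istar hk hkℓ
  have : lowerDepth istar s < N := hs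
  show lowerDepth istar _ < N
  omega

/-- The hops out of `L` are the discrepancy, and each strictly decreases the depth. -/
lemma current_lmapDomain_union_sub_mem {istar ℓ : ℤ} (hℓ : 1 ≤ ℓ) {L : Finset ℤ}
    (hL : ↑L ⊆ Set.Iic istar) {f : FockSpace} (hf : f ∈ statesAbove istar) :
    current ℓ (Finsupp.lmapDomain ℂ ℂ (L ∪ ·) f) - Finsupp.lmapDomain ℂ ℂ (L ∪ ·) (current ℓ f)
      ∈ statesLowerDepthLT istar (lowerDepth istar L) := by
  set Ψ := Finsupp.lmapDomain ℂ ℂ (L ∪ ·)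
  refine Finsupp.supported_le_comap_of_single (T := current ℓ ∘ₗ Ψ - Ψ ∘ₗ current ℓ)
    (V := statesLowerDepthLT istar (lowerDepth istar L)) (fun s hs => ?_) hf
  have hd := Finset.disjoint_of_coe_subset_Iic_Ioi hL hs
  have hcommute : ∑ k ∈ s, create (k + ℓ) (annihilate k (Finsupp.single (L ∪ s) 1)) =
      Ψ (current ℓ (Finsupp.single s 1)) := by
    rw [current_single, map_sum]
    refine Finset.sum_congr rfl fun k hk => create_annihilate_single_union hd
      (fun i hi => (hL hi).trans_lt (hs hk)) (fun i hi => ?_)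
    have : istar < k := hs hk
    have : i ≤ istar := hL hi
    omega
  have hΨs : Ψ (Finsupp.single s 1) = Finsupp.single (L ∪ s) 1 := Finsupp.mapDomain_single
  rw [LinearMap.sub_apply, LinearMap.comp_apply, LinearMap.comp_apply, hΨs, current_single,
    Finset.sum_union hd, hcommute, add_sub_cancel_right]
  refine Submodule.sum_mem _ fun k hk => create_annihilate_single_mem_supported fun hk' hkℓ => ?_
  have := lowerDepth_insert_erase istar hk' hkℓ
  have := lowerDepth_union (istar := istar) hd hs
  have : k ≤ istar := hL hk
  show lowerDepth istar _ < _
  omega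

lemma lmapDomain_union_apply_union {istar : ℤ} {L t : Finset ℤ} (hL : ↑L ⊆ Set.Iic istar)
    (ht : ↑t ⊆ Set.Ioi istar) {g : FockSpace} (hg : g ∈ statesAbove istar) :
    Finsupp.lmapDomain ℂ ℂ (L ∪ ·) g (L ∪ t) = g t := by
  refine Finsupp.mapDomain_apply' _ g ((Finsupp.mem_supported ℂ g).1 hg) ?_ ht
  intro a ha b hb hab
  rw [← Finset.union_sdiff_cancel_left (Finset.disjoint_of_coe_subset_Iic_Ioi hL ha),
    ← Finset.union_sdiff_cancel_left (Finset.disjoint_of_coe_subset_Iic_Ioi hL hb)]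
  exact congrArg (· \ L) hab

lemma apply_eq_zero_of_mem_statesLowerDepthLT {istar : ℤ} {N : ℕ} {f : FockSpace}
    (hf : f ∈ statesLowerDepthLT istar N) {t : Finset ℤ} (ht : N ≤ lowerDepth istar t) :
    f t = 0 :=
  (Finsupp.mem_supported' ℂ f).1 hf t ht.not_gt

/-- **Truncation lemma for current matrix elements.**
If the finitely supported bit strings `x, y ∈ {0,1}^ℤ` agree on all modes
`i ≤ i*`, and `x', y'` are obtained from `x, y` by setting all bits at
indices `≤ i*` to zero, then
`⟨y| ∏_j J_{ν_j} |x⟩ = ⟨y'| ∏_j J_{ν_j} |x'⟩` for any finite sequence of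
positive integers `ν₁, …, ν_c`. -/
theorem current_matrix_element_truncation
    (x y : Finset ℤ) (istar : ℤ)
    (hagree : ∀ i : ℤ, i ≤ istar → (i ∈ x ↔ i ∈ y))
    (ν : List ℕ) (hν : ∀ ℓ ∈ ν, 1 ≤ ℓ) :
    ((ν.map fun ℓ => current (ℓ : ℤ)).prod (Finsupp.single x 1)) y =
    ((ν.map fun ℓ => current (ℓ : ℤ)).prod
        (Finsupp.single (x.filter fun i => istar < i) 1))
      (y.filter fun i => istar < i) := by
  set l := ν.map fun ℓ => current (ℓ : ℤ)
  have hl : ∀ T ∈ l, ∃ ℓ : ℤ, 1 ≤ ℓ ∧ T = current ℓ := by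
    intro T hT
    obtain ⟨ℓ, hℓ, rfl⟩ : ∃ ℓ ∈ ν, current ℓ = T := by simpa [l] using hT
    exact ⟨ℓ, by exact_mod_cast hν ℓ hℓ, rfl⟩
  set L := x.filter fun i => ¬istar < i
  set Ψ := Finsupp.lmapDomain ℂ ℂ (L ∪ ·)
  have hL : ↑L ⊆ Set.Iic istar := fun i hi => not_lt.1 (Finset.mem_filter.1 hi).2
  have habove (s : Finset ℤ) : ↑(s.filter (istar < ·)) ⊆ Set.Ioi istar :=
    fun i hi => (Finset.mem_filter.1 hi).2
  have hx : Finsupp.single x 1 = Ψ (Finsupp.single (x.filter (istar < ·)) 1) := by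
    rw [Finsupp.lmapDomain_apply, Finsupp.mapDomain_single, Finset.filter_not_union_filter]
  have hy : L ∪ y.filter (istar < ·) = y := by
    have : y.filter (fun i => ¬istar < i) = L := by
      ext i
      simp only [L, Finset.mem_filter, not_lt]
      exact and_congr_left fun h => (hagree i h).symm
    rw [← this, Finset.filter_not_union_filter]
  obtain ⟨hA, hF⟩ := list_prod_intertwine_mod Ψ (A := statesAbove istar)
    (F := statesLowerDepthLT istar (lowerDepth istar L))
    (fun T hT => by
      obtain ⟨ℓ, hℓ, rfl⟩ := hl T hT; exact statesAbove_le_comap_current istar (by omega))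
    (fun T hT => by
      obtain ⟨ℓ, hℓ, rfl⟩ := hl T hT
      exact statesLowerDepthLT_le_comap_current istar _ (by omega))
    (fun T hT => by
      obtain ⟨ℓ, hℓ, rfl⟩ := hl T hT
      exact fun _ => current_lmapDomain_union_sub_mem hℓ hL)
    (Finsupp.single_mem_supported ℂ 1 (habove x))
  calc l.prod (Finsupp.single x 1) y
      = l.prod (Ψ (Finsupp.single (x.filter (istar < ·)) 1)) (L ∪ y.filter (istar < ·)) := by
        rw [hx, hy]
    _ = Ψ (l.prod (Finsupp.single (x.filter (istar < ·)) 1)) (L ∪ y.filter (istar < ·)) := by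
        rw [← sub_eq_zero, ← Finsupp.sub_apply]
        exact apply_eq_zero_of_mem_statesLowerDepthLT hF
          (lowerDepth_union (Finset.disjoint_of_coe_subset_Iic_Ioi hL (habove y)) (habove y)).ge
    _ = l.prod (Finsupp.single (x.filter (istar < ·)) 1) (y.filter (istar < ·)) :=
        lmapDomain_union_apply_union hL (habove y) hA

end
end

section
/- The number of cycles c(g) of a uniformly random permutation g ∈ S_n satisfies, for every ℓ ≥ 1, Pr[c(g) ≥ 1 + ℓ·H_n] ≤ 2·e^{1 − (ℓ log ℓ − ℓ + 1)·H_n}, where H_n = ∑_{j=1}^n 1/j. -/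
/-!
The number of cycles of `σ`, fixed points included, is the number of parts of `σ.partition`.
Writing `σ ∈ S_{n+1}` as `swap 0 p * σ'` with `σ'` fixing `0` (`Equiv.Perm.decomposeFin`)
either adds the fixed point `0` (when `p = 0`) or inserts `0` into the cycle of `p`, so
`∑_{σ ∈ Sₙ} z^{c(σ)} = z (z + 1) ⋯ (z + n - 1)`. For `z = ℓ ≥ 1` the bound
`ℓ + j ≤ (j + 1) e^{(ℓ-1)/(j+1)}` gives `E[ℓ^{c}] ≤ e^{(ℓ-1) H_n}`, and Markov's
inequality for `ℓ^{c}` at level `ℓ^{1 + ℓ H_n}` yields the tail bound, with room to spare.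
-/

open Equiv Finset Real

namespace Equiv.Perm

variable {α : Type*} [DecidableEq α]

theorem disjoint_swap_of_apply_eq_self {f : Perm α} {a b : α} (ha : f a = a) (hb : f b = b) :
    Disjoint f (swap a b) := by
  intro x
  by_cases hxa : x = a
  · exact .inl (hxa ▸ ha)
  by_cases hxb : x = b
  · exact .inl (hxb ▸ hb)
  · exact .inr (swap_apply_of_ne_of_ne hxa hxb)

variable [Fintype α]

theorem card_parts_partition (σ : Perm α) :
    Multiset.card σ.partition.parts =
      Multiset.card σ.cycleType + (Fintype.card α - σ.cycleType.sum) := by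
  simp [parts_partition, sum_cycleType]

theorem card_parts_partition_eq_card_cycleType_add_card_fixedPoints (σ : Perm α) :
    Multiset.card σ.partition.parts = Multiset.card σ.cycleType + #{x | σ x = x} := by
  rw [parts_partition, Multiset.card_add, Multiset.card_replicate, ← card_compl]
  congr 2
  ext x
  simp

theorem sum_cycleType_le_card (σ : Perm α) : σ.cycleType.sum ≤ Fintype.card α := by
  rw [sum_cycleType]
  exact card_le_univ _

theorem swap_mul_cycleOf_eq_formPerm {f : Perm α} {a b : α} (hb : f b ≠ b) :
    swap a b * f.cycleOf b = (a :: f.toList b).formPerm := by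
  have hb' : b ∈ f.support := mem_support.2 hb
  obtain ⟨t, ht⟩ : ∃ t, f.toList b = b :: t := by
    rcases h : f.toList b with _ | ⟨y, t⟩
    · exact absurd h (toList_eq_nil_iff.not.2 (not_not.2 hb'))
    · have hy := toList_getElem_zero f b hb'
      simp only [h, List.getElem_cons_zero] at hy
      exact ⟨t, by rw [hy]⟩
  rw [ht, List.formPerm_cons_cons, ← ht, formPerm_toList]

theorem nodup_cons_toList {f : Perm α} {a : α} (ha : f a = a) (b : α) :
    (a :: f.toList b).Nodup := by
  refine List.nodup_cons.2 ⟨fun h => ?_, nodup_toList f b⟩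
  obtain ⟨hba, hb⟩ := mem_toList_iff.1 h
  exact mem_support.1 (hba.mem_support_iff.1 hb) ha

theorem disjoint_mul_inv_cycleOf {f : Perm α} {b : α} (hb : f b ≠ b) :
    Disjoint (f * (f.cycleOf b)⁻¹) (f.cycleOf b) :=
  disjoint_mul_inv_of_mem_cycleFactorsFinset
    (cycleOf_mem_cycleFactorsFinset_iff.2 (mem_support.2 hb))

theorem cycleType_eq_cycleType_mul_inv_cycleOf_add {f : Perm α} {b : α} (hb : f b ≠ b) :
    f.cycleType = (f * (f.cycleOf b)⁻¹).cycleType + {#(f.cycleOf b).support} := by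
  conv_lhs => rw [← inv_mul_cancel_right f (f.cycleOf b)]
  rw [(disjoint_mul_inv_cycleOf hb).cycleType_mul, (isCycle_cycleOf f hb).cycleType]

theorem cycleType_swap_mul_of_apply_eq_self {f : Perm α} {a b : α} (ha : f a = a)
    (hb : f b = b) (hab : a ≠ b) : (swap a b * f).cycleType = 2 ::ₘ f.cycleType := by
  rw [(disjoint_swap_of_apply_eq_self ha hb).symm.cycleType_mul, (isCycle_swap hab).cycleType,
    card_support_swap hab]
  rfl

theorem cycleType_swap_mul_of_apply_ne_self {f : Perm α} {a b : α} (ha : f a = a)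
    (hb : f b ≠ b) :
    (swap a b * f).cycleType =
      (f * (f.cycleOf b)⁻¹).cycleType + {#(f.cycleOf b).support + 1} := by
  set c := f.cycleOf b
  have hdisj : Disjoint (f * c⁻¹) c := disjoint_mul_inv_cycleOf hb
  have hca : c a = a := by
    by_contra h
    exact mem_support.1 (support_cycleOf_le f b (mem_support.2 h)) ha
  have hswap : Disjoint (f * c⁻¹) (swap a b) := disjoint_swap_of_apply_eq_self
    (by rw [mul_apply, inv_eq_iff_eq.2 hca.symm, ha]) ((hdisj b).resolve_right (by simpa [c]))
  have hcomm : swap a b * f = (f * c⁻¹) * (swap a b * c) := by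
    rw [← mul_assoc, hswap.commute.eq, mul_assoc, inv_mul_cancel_right]
  have hlen : 2 ≤ (a :: f.toList b).length := by simpa using hb
  have hL := nodup_cons_toList ha b
  rw [hcomm, (hswap.mul_right hdisj).cycleType_mul, swap_mul_cycleOf_eq_formPerm hb,
    (List.isCycle_formPerm hL hlen).cycleType,
    List.support_formPerm_of_nodup _ hL (by simpa using hb), List.toFinset_card_of_nodup hL,
    List.length_cons, length_toList]

theorem card_parts_partition_swap_mul {f : Perm α} {a b : α} (ha : f a = a) (hab : a ≠ b) :
    Multiset.card (swap a b * f).partition.parts + 1 = Multiset.card f.partition.parts := by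
  have hle := sum_cycleType_le_card (swap a b * f)
  rw [card_parts_partition, card_parts_partition]
  by_cases hb : f b = b
  · rw [cycleType_swap_mul_of_apply_eq_self ha hb hab] at hle ⊢
    simp only [Multiset.card_cons, Multiset.sum_cons] at hle ⊢
    omega
  · rw [cycleType_swap_mul_of_apply_ne_self ha hb] at hle ⊢
    rw [cycleType_eq_cycleType_mul_inv_cycleOf_add hb]
    simp only [Multiset.card_add, Multiset.card_singleton, Multiset.sum_add,
      Multiset.sum_singleton] at hle ⊢
    omega

theorem decomposeFin_symm_zero {n : ℕ} (e : Perm (Fin n)) :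
    decomposeFin.symm (0, e) = e.extendDomain (finSuccAboveEquiv 0) := by
  refine Equiv.ext fun x => Fin.cases ?_ (fun i => ?_) x
  · rw [decomposeFin_symm_apply_zero, extendDomain_apply_not_subtype _ _ (by simp)]
  · have hsucc (j : Fin n) : (finSuccAboveEquiv 0 j : Fin (n + 1)) = j.succ := by
      simp only [finSuccAboveEquiv_apply, Fin.succAbove_zero]
    rw [decomposeFin_symm_apply_succ, ← hsucc i, extendDomain_apply_image, hsucc, swap_self,
      refl_apply]

theorem decomposeFin_symm_eq_swap_mul {n : ℕ} (p : Fin (n + 1)) (e : Perm (Fin n)) :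
    decomposeFin.symm (p, e) = swap 0 p * decomposeFin.symm (0, e) := by
  refine Equiv.ext fun x => Fin.cases ?_ (fun i => ?_) x <;> simp

theorem card_parts_partition_decomposeFin_symm {n : ℕ} (p : Fin (n + 1)) (e : Perm (Fin n)) :
    Multiset.card (decomposeFin.symm (p, e)).partition.parts =
      Multiset.card e.partition.parts + if p = 0 then 1 else 0 := by
  have h0 : Multiset.card (decomposeFin.symm (0, e)).partition.parts =
      Multiset.card e.partition.parts + 1 := by
    have hle := sum_cycleType_le_card e
    rw [card_parts_partition, card_parts_partition, decomposeFin_symm_zero,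
      cycleType_extendDomain]
    simp only [Fintype.card_fin] at hle ⊢
    omega
  split_ifs with hp
  · rw [hp, h0]
  · have hswap :=
      card_parts_partition_swap_mul (f := decomposeFin.symm (0, e)) (by simp) (Ne.symm hp)
    rw [← decomposeFin_symm_eq_swap_mul, h0] at hswap
    omega

theorem sum_pow_card_parts_partition {R : Type*} [CommSemiring R] (n : ℕ) (z : R) :
    ∑ σ : Perm (Fin n), z ^ Multiset.card σ.partition.parts = ∏ j ∈ range n, (z + j) := by
  induction n with
  | zero => simp [card_parts_partition]
  | succ n ih =>
    rw [← decomposeFin.symm.sum_comp, Fintype.sum_prod_type_right, prod_range_succ, ← ih,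
      sum_mul]
    refine sum_congr rfl fun e _ => ?_
    simp only [Fin.sum_univ_succ, card_parts_partition_decomposeFin_symm, Fin.succ_ne_zero,
      if_true, if_false, sum_const, card_univ, Fintype.card_fin, nsmul_eq_mul, pow_succ]
    ring

end Equiv.Perm

theorem prod_range_add_le_factorial_mul_exp {x : ℝ} (hx : 0 ≤ x) (n : ℕ) :
    ∏ j ∈ range n, (x + j) ≤ n.factorial * exp ((x - 1) * harmonic n) := by
  induction n with
  | zero => simp
  | succ n ih =>
    have hstep : x + n ≤ (n + 1) * exp ((x - 1) / (n + 1)) :=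
      calc x + n = (n + 1) * ((x - 1) / (n + 1) + 1) := by field_simp; ring
        _ ≤ (n + 1) * exp ((x - 1) / (n + 1)) := by gcongr; exact add_one_le_exp _
    calc ∏ j ∈ range (n + 1), (x + j)
        ≤ n.factorial * exp ((x - 1) * harmonic n) * ((n + 1) * exp ((x - 1) / (n + 1))) := by
          rw [prod_range_succ]; gcongr
      _ = (n + 1).factorial * exp ((x - 1) * harmonic (n + 1)) := by
          rw [Nat.factorial_succ, harmonic_succ]; push_cast
          rw [mul_add, exp_add]; field_simp

theorem card_filter_mul_rpow_le_sum_pow {ι : Type*} (s : Finset ι) (c : ι → ℕ) {x : ℝ}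
    (hx : 1 ≤ x) (t : ℝ) : #{i ∈ s | t ≤ c i} * x ^ t ≤ ∑ i ∈ s, x ^ c i :=
  calc (#{i ∈ s | t ≤ c i} : ℝ) * x ^ t = ∑ i ∈ s with t ≤ c i, x ^ t := by
        rw [sum_const, nsmul_eq_mul]
    _ ≤ ∑ i ∈ s with t ≤ c i, x ^ c i := sum_le_sum fun i hi => by
        rw [← rpow_natCast]; exact rpow_le_rpow_of_exponent_le hx (mem_filter.1 hi).2
    _ ≤ ∑ i ∈ s, x ^ c i :=
        sum_le_sum_of_subset_of_nonneg (filter_subset _ _) fun _ _ _ => by positivity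

/-- **Tail bound for the number of cycles of a random permutation.**
For a uniformly random `g ∈ Sₙ` with `c(g)` cycles (fixed points included)
and every `ℓ ≥ 1`,
`Pr[c(g) ≥ 1 + ℓ·H_n] ≤ 2·e^{1 − (ℓ log ℓ − ℓ + 1)·H_n}`,
where `H_n = ∑_{j=1}^n 1/j` is the `n`-th harmonic number. -/
theorem cycle_count_tail_bound (n : ℕ) (ℓ : ℝ) (hℓ : 1 ≤ ℓ) :
    ((Finset.univ.filter fun g : Equiv.Perm (Fin n) =>
        1 + ℓ * (∑ j ∈ Finset.Icc 1 n, (1 : ℝ) / j) ≤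
          ((g.cycleType.card +
            (Finset.univ.filter fun x : Fin n => g x = x).card : ℕ) : ℝ)).card : ℝ) /
      (Nat.factorial n : ℝ) ≤
    2 * Real.exp (1 - (ℓ * Real.log ℓ - ℓ + 1) *
      (∑ j ∈ Finset.Icc 1 n, (1 : ℝ) / j)) := by
  have hH : ∑ j ∈ Icc 1 n, (1 : ℝ) / j = harmonic n := by simp [harmonic_eq_sum_Icc]
  simp_rw [hH, ← Perm.card_parts_partition_eq_card_cycleType_add_card_fixedPoints]
  set H : ℝ := (harmonic n : ℝ)
  have hℓ0 : 0 < ℓ := by linarith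
  have hmarkov := card_filter_mul_rpow_le_sum_pow univ
    (fun σ : Perm (Fin n) => Multiset.card σ.partition.parts) hℓ (1 + ℓ * H)
  rw [Perm.sum_pow_card_parts_partition] at hmarkov
  have hmoment := prod_range_add_le_factorial_mul_exp hℓ0.le n
  set E := exp (1 - (ℓ * log ℓ - ℓ + 1) * H)
  have hexp : exp ((ℓ - 1) * H) / ℓ ^ (1 + ℓ * H) ≤ 2 * E := by
    rw [rpow_def_of_pos hℓ0, ← exp_sub]
    have hlog : 0 ≤ log ℓ := log_nonneg hℓ
    calc exp ((ℓ - 1) * H - log ℓ * (1 + ℓ * H)) ≤ E := exp_le_exp.2 (by linarith)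
      _ ≤ 2 * E := by linarith [show 0 < E from exp_pos _]
  rw [div_le_iff₀ (by positivity)]
  calc _ ≤ n.factorial * exp ((ℓ - 1) * H) / ℓ ^ (1 + ℓ * H) := by
        rw [le_div_iff₀ (by positivity)]; linarith
    _ ≤ _ := by rw [mul_div_assoc, mul_comm]; gcongr
end
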